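/- Let N ∈ ℕ, let x₀ be a real sequence supported in {1,…,N} with ‖x₀‖_B ≤ 1, let δ > 0, and let n > N. Then for both choices of sign, ‖x₀ ± (δ/(2n)) ∑_{i=n}^{2n−1} e_i‖_B² ≤ ‖x₀‖_B² + δN²/n + δ²/4. -/

import Mathlib

/-!
Write a block sum of `|x₀ + z|` over an admissible set `E_j` as at most `a_j + b_j`, the block
sums of `|x₀|` and of `|z|`. Then `∑ a_j² ≤ ‖x₀‖²`, and `∑ b_j² ≤ (∑ b_j)² ≤ ‖z‖₁²` because the
blocks are disjoint. As `x₀` lives on `[1, N]` and `z` on `(N, ∞)`, at most one block meets both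
supports; that block contains an index `≤ N`, so by admissibility it has at most `N` elements and
`a_j b_j ≤ ‖x₀‖ · N ‖z‖_∞`. For `z = ± (δ / 2n) ∑_{i=n}^{2n-1} e_i` this gives
`‖z‖₁ = δ / 2` and a cross term `2 N ‖x₀‖ δ / 2n ≤ δ N² / n`.
-/

/-- A finite set of (positive) indices is admissible if it is nonempty and its cardinality
is at most its minimum. -/
def BAdmissible (E : Finset ℕ) : Prop := E.Nonempty ∧ ∀ i ∈ E, E.card ≤ i

/-- The set of values whose supremum defines the Baernstein norm of a real sequence `x`:
all numbers `(∑_{j<k} (∑_{i ∈ E j} |x i|)²)^{1/2}` over finite increasing chains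
`E 0 < E 1 < ... < E (k-1)` of admissible sets. -/
def baernsteinSet (x : ℕ → ℝ) : Set ℝ :=
  {r | ∃ (k : ℕ) (E : ℕ → Finset ℕ),
    (∀ j < k, BAdmissible (E j)) ∧
    (∀ j, j + 1 < k → ∀ a ∈ E j, ∀ b ∈ E (j + 1), a < b) ∧
    r = Real.sqrt (∑ j ∈ Finset.range k, (∑ i ∈ E j, |x i|) ^ 2)}

/-- The Baernstein norm of a real sequence (as a supremum in `ℝ`). -/
noncomputable def baernsteinNorm (x : ℕ → ℝ) : ℝ := sSup (baernsteinSet x)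

open Finset

lemma Finset.sum_le_of_at_most_one_ne_zero {ι : Type*} {s : Finset ι} {f : ι → ℝ} {M : ℝ}
    (hM : 0 ≤ M) (hfM : ∀ i ∈ s, f i ≤ M) (hf : ∀ i ∈ s, ∀ j ∈ s, f i ≠ 0 → f j ≠ 0 → i = j) :
    ∑ i ∈ s, f i ≤ M := by
  classical
  have hcard : #{i ∈ s | f i ≠ 0} ≤ 1 := card_le_one.mpr fun i hi j hj =>
    hf i (mem_filter.mp hi).1 j (mem_filter.mp hj).1 (mem_filter.mp hi).2 (mem_filter.mp hj).2
  calc ∑ i ∈ s, f i = ∑ i ∈ s with f i ≠ 0, f i := (sum_filter_ne_zero s).symm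
    _ ≤ #{i ∈ s | f i ≠ 0} • M := sum_le_card_nsmul _ _ _ fun i hi => hfM i (mem_filter.mp hi).1
    _ ≤ 1 • M := nsmul_le_nsmul_left hM hcard
    _ = M := one_nsmul M

section Chain

variable {k : ℕ} {E : ℕ → Finset ℕ}

lemma lt_of_mem_of_mem_chain (hne : ∀ j < k, (E j).Nonempty)
    (hord : ∀ j, j + 1 < k → ∀ a ∈ E j, ∀ b ∈ E (j + 1), a < b)
    {j j' : ℕ} (hjj' : j < j') (hj' : j' < k) {a b : ℕ} (ha : a ∈ E j) (hb : b ∈ E j') :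
    a < b := by
  induction j', hjj' using Nat.le_induction generalizing b with
  | base => exact hord j hj' a ha b hb
  | succ m hjm ih =>
    obtain ⟨c, hc⟩ := hne m (by omega)
    exact (ih (by omega) hc).trans (hord m hj' c hc b hb)

lemma pairwiseDisjoint_chain (hne : ∀ j < k, (E j).Nonempty)
    (hord : ∀ j, j + 1 < k → ∀ a ∈ E j, ∀ b ∈ E (j + 1), a < b) :
    (range k : Set ℕ).PairwiseDisjoint E := by
  intro j hj j' hj' hjj'
  simp only [coe_range, Set.mem_Iio] at hj hj'
  refine Finset.disjoint_left.mpr fun a ha ha' => ?_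
  rcases hjj'.lt_or_gt with h | h
  · exact lt_irrefl a (lt_of_mem_of_mem_chain hne hord h hj' ha ha')
  · exact lt_irrefl a (lt_of_mem_of_mem_chain hne hord h hj ha' ha)

lemma sum_sum_abs_le_of_chain {x : ℕ → ℝ} {L : ℝ} (hL : ∀ S : Finset ℕ, ∑ i ∈ S, |x i| ≤ L)
    (hne : ∀ j < k, (E j).Nonempty)
    (hord : ∀ j, j + 1 < k → ∀ a ∈ E j, ∀ b ∈ E (j + 1), a < b) :
    ∑ j ∈ range k, ∑ i ∈ E j, |x i| ≤ L := by
  rw [← sum_biUnion (pairwiseDisjoint_chain hne hord)]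
  exact hL _

end Chain

lemma zero_mem_baernsteinSet (x : ℕ → ℝ) : (0 : ℝ) ∈ baernsteinSet x :=
  ⟨0, fun _ => ∅, by simp, by simp, by simp⟩

lemma baernsteinNorm_nonneg (x : ℕ → ℝ) : 0 ≤ baernsteinNorm x :=
  Real.sSup_nonneg <| by rintro r ⟨k, E, -, -, rfl⟩; exact Real.sqrt_nonneg _

lemma le_of_mem_baernsteinSet {x : ℕ → ℝ} {L : ℝ} (hL : ∀ S : Finset ℕ, ∑ i ∈ S, |x i| ≤ L)
    {r : ℝ} (hr : r ∈ baernsteinSet x) : r ≤ L := by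
  obtain ⟨k, E, hadm, hord, rfl⟩ := hr
  have hblock : ∀ j ∈ range k, 0 ≤ ∑ i ∈ E j, |x i| := fun j _ => sum_nonneg fun i _ => abs_nonneg _
  calc √(∑ j ∈ range k, (∑ i ∈ E j, |x i|) ^ 2)
      ≤ √((∑ j ∈ range k, ∑ i ∈ E j, |x i|) ^ 2) :=
        Real.sqrt_le_sqrt (sum_sq_le_sq_sum_of_nonneg hblock)
    _ = ∑ j ∈ range k, ∑ i ∈ E j, |x i| := Real.sqrt_sq (sum_nonneg hblock)
    _ ≤ L := sum_sum_abs_le_of_chain hL (fun j hj => (hadm j hj).1) hord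

lemma sum_abs_le_sum_range_of_support {x : ℕ → ℝ} {N : ℕ} (hx : ∀ i, N < i → x i = 0)
    (S : Finset ℕ) : ∑ i ∈ S, |x i| ≤ ∑ i ∈ range (N + 1), |x i| := by
  rw [← sum_filter_of_ne (p := (· ≤ N)) fun i _ hi => not_lt.mp fun h => hi (by simp [hx i h])]
  refine sum_le_sum_of_subset_of_nonneg (fun i hi => ?_) fun i _ _ => abs_nonneg _
  simp only [mem_filter, mem_range, Order.lt_add_one_iff] at hi ⊢
  exact hi.2

lemma bddAbove_baernsteinSet {x : ℕ → ℝ} {N : ℕ} (hx : ∀ i, N < i → x i = 0) :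
    BddAbove (baernsteinSet x) :=
  ⟨_, fun _ hr => le_of_mem_baernsteinSet (sum_abs_le_sum_range_of_support hx) hr⟩

lemma baernsteinNorm_sq_le {x : ℕ → ℝ} {C : ℝ} (hC : 0 ≤ C)
    (h : ∀ (k : ℕ) (E : ℕ → Finset ℕ), (∀ j < k, BAdmissible (E j)) →
      (∀ j, j + 1 < k → ∀ a ∈ E j, ∀ b ∈ E (j + 1), a < b) →
      ∑ j ∈ range k, (∑ i ∈ E j, |x i|) ^ 2 ≤ C) :
    baernsteinNorm x ^ 2 ≤ C := by
  have hle : baernsteinNorm x ≤ √C := csSup_le ⟨0, zero_mem_baernsteinSet x⟩ <| by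
    rintro r ⟨k, E, hadm, hord, rfl⟩
    exact Real.sqrt_le_sqrt (h k E hadm hord)
  exact (Real.le_sqrt (baernsteinNorm_nonneg x) hC).mp hle

section BlockSums

variable {x z : ℕ → ℝ} {N : ℕ} {M : ℝ} {k : ℕ} {E : ℕ → Finset ℕ}

lemma sum_sq_le_baernsteinNorm_sq (hx : BddAbove (baernsteinSet x))
    (hadm : ∀ j < k, BAdmissible (E j))
    (hord : ∀ j, j + 1 < k → ∀ a ∈ E j, ∀ b ∈ E (j + 1), a < b) :
    ∑ j ∈ range k, (∑ i ∈ E j, |x i|) ^ 2 ≤ baernsteinNorm x ^ 2 :=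
  (Real.sqrt_le_iff.mp (le_csSup hx ⟨k, E, hadm, hord, rfl⟩)).2

lemma sum_abs_le_baernsteinNorm (hx : BddAbove (baernsteinSet x)) {F : Finset ℕ}
    (hF : BAdmissible F) : ∑ i ∈ F, |x i| ≤ baernsteinNorm x := by
  have h := sum_sq_le_baernsteinNorm_sq (k := 1) (E := fun _ => F) hx (fun _ _ => hF)
    (fun j hj => by omega)
  rw [sum_range_one] at h
  exact (le_abs_self _).trans (abs_le_of_sq_le_sq h (baernsteinNorm_nonneg x))

lemma sum_abs_mul_sum_abs_le (hx : ∀ i, N < i → x i = 0) (hM : ∀ i, |z i| ≤ M)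
    {F : Finset ℕ} (hF : BAdmissible F) :
    (∑ i ∈ F, |x i|) * (∑ i ∈ F, |z i|) ≤ N * M * baernsteinNorm x := by
  have hM0 : 0 ≤ M := (abs_nonneg _).trans (hM 0)
  by_cases hx0 : ∑ i ∈ F, |x i| = 0
  · rw [hx0, zero_mul]
    exact mul_nonneg (mul_nonneg N.cast_nonneg hM0) (baernsteinNorm_nonneg x)
  obtain ⟨i, hi, hxi⟩ := exists_ne_zero_of_sum_ne_zero hx0
  have hcard : (#F : ℝ) ≤ N := by
    exact_mod_cast (hF.2 i hi).trans (not_lt.mp fun hNi => hxi (by simp [hx i hNi]))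
  have hzF : ∑ i ∈ F, |z i| ≤ N * M := (sum_le_card_nsmul _ _ _ fun i _ => hM i).trans <| by
    rw [nsmul_eq_mul]; gcongr
  calc (∑ i ∈ F, |x i|) * ∑ i ∈ F, |z i| ≤ baernsteinNorm x * (N * M) :=
        mul_le_mul (sum_abs_le_baernsteinNorm (bddAbove_baernsteinSet hx) hF) hzF
          (sum_nonneg fun i _ => abs_nonneg _) (baernsteinNorm_nonneg x)
    _ = N * M * baernsteinNorm x := mul_comm _ _

lemma sum_mul_sum_abs_le (hx : ∀ i, N < i → x i = 0) (hz : ∀ i ≤ N, z i = 0)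
    (hM : ∀ i, |z i| ≤ M) (hadm : ∀ j < k, BAdmissible (E j))
    (hord : ∀ j, j + 1 < k → ∀ a ∈ E j, ∀ b ∈ E (j + 1), a < b) :
    ∑ j ∈ range k, (∑ i ∈ E j, |x i|) * (∑ i ∈ E j, |z i|) ≤ N * M * baernsteinNorm x := by
  have hsep : ∀ j j', j < j' → j' < k → (∑ i ∈ E j, |z i|) ≠ 0 → (∑ i ∈ E j', |x i|) = 0 :=
    fun j j' hjj' hj' hz0 => by_contra fun hx0 => by
      obtain ⟨a, ha, hza⟩ := exists_ne_zero_of_sum_ne_zero hz0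
      obtain ⟨b, hb, hxb⟩ := exists_ne_zero_of_sum_ne_zero hx0
      have hab := lt_of_mem_of_mem_chain (fun j hj => (hadm j hj).1) hord hjj' hj' ha hb
      rcases le_or_gt a N with haN | hNa
      · exact hza (by simp [hz a haN])
      · exact hxb (by simp [hx b (hNa.trans hab)])
  have hM0 : 0 ≤ M := (abs_nonneg _).trans (hM 0)
  refine sum_le_of_at_most_one_ne_zero
    (mul_nonneg (mul_nonneg N.cast_nonneg hM0) (baernsteinNorm_nonneg x))
    (fun j hj => sum_abs_mul_sum_abs_le hx hM (hadm j (mem_range.mp hj)))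
    fun j hj j' hj' h h' => ?_
  simp only [mem_range] at hj hj'
  rcases lt_trichotomy j j' with hjj' | rfl | hjj'
  · exact absurd (hsep j j' hjj' hj' (right_ne_zero_of_mul h)) (left_ne_zero_of_mul h')
  · rfl
  · exact absurd (hsep j' j hjj' hj (right_ne_zero_of_mul h')) (left_ne_zero_of_mul h)

theorem baernsteinNorm_add_sq_le {L : ℝ}
    (hx : ∀ i, N < i → x i = 0) (hz : ∀ i ≤ N, z i = 0) (hM : ∀ i, |z i| ≤ M)
    (hL : ∀ S : Finset ℕ, ∑ i ∈ S, |z i| ≤ L) :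
    baernsteinNorm (x + z) ^ 2 ≤ baernsteinNorm x ^ 2 + 2 * (N * M * baernsteinNorm x) + L ^ 2 := by
  have hM0 : 0 ≤ M := (abs_nonneg _).trans (hM 0)
  have hC : 0 ≤ baernsteinNorm x ^ 2 + 2 * (N * M * baernsteinNorm x) + L ^ 2 := by
    have := baernsteinNorm_nonneg x
    positivity
  refine baernsteinNorm_sq_le hC fun k E hadm hord => ?_
  set a : ℕ → ℝ := fun j => ∑ i ∈ E j, |x i|
  set b : ℕ → ℝ := fun j => ∑ i ∈ E j, |z i|
  have hb : ∀ j ∈ range k, 0 ≤ b j := fun j _ => sum_nonneg fun i _ => abs_nonneg _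
  have hbL : ∑ j ∈ range k, b j ^ 2 ≤ L ^ 2 :=
    (sum_sq_le_sq_sum_of_nonneg hb).trans <| pow_le_pow_left₀ (sum_nonneg hb)
      (sum_sum_abs_le_of_chain hL (fun j hj => (hadm j hj).1) hord) 2
  calc ∑ j ∈ range k, (∑ i ∈ E j, |(x + z) i|) ^ 2 ≤ ∑ j ∈ range k, (a j + b j) ^ 2 := by
        refine sum_le_sum fun j _ => pow_le_pow_left₀ (sum_nonneg fun i _ => abs_nonneg _) ?_ 2
        rw [← sum_add_distrib]
        exact sum_le_sum fun i _ => abs_add_le (x i) (z i)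
    _ = ∑ j ∈ range k, a j ^ 2 + 2 * ∑ j ∈ range k, a j * b j + ∑ j ∈ range k, b j ^ 2 := by
        simp only [add_sq, sum_add_distrib, mul_sum, mul_assoc]
    _ ≤ _ := by
        gcongr
        · exact sum_sq_le_baernsteinNorm_sq (bddAbove_baernsteinSet hx) hadm hord
        · exact sum_mul_sum_abs_le hx hz hM hadm hord

end BlockSums

theorem baernstein_perturbation_estimate (N : ℕ) (x₀ : ℕ → ℝ)
    (hsupp : ∀ i, x₀ i ≠ 0 → 1 ≤ i ∧ i ≤ N)
    (hx₀ : baernsteinNorm x₀ ≤ 1)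
    (δ : ℝ) (hδ : 0 < δ) (n : ℕ) (hn : N < n)
    (σ : ℝ) (hσ : σ = 1 ∨ σ = -1) :
    baernsteinNorm
        (fun i => x₀ i + σ * (δ / (2 * n)) * (if n ≤ i ∧ i ≤ 2 * n - 1 then 1 else 0)) ^ 2
      ≤ baernsteinNorm x₀ ^ 2 + δ * N ^ 2 / n + δ ^ 2 / 4 := by
  set d := δ / (2 * n) with hd_def
  have hn0 : (0 : ℝ) < n := by exact_mod_cast N.zero_le.trans_lt hn
  have hd : 0 < d := by positivity
  have hz_abs : ∀ i, |σ * d * (if n ≤ i ∧ i ≤ 2 * n - 1 then 1 else 0)|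
      = d * (if n ≤ i ∧ i ≤ 2 * n - 1 then 1 else 0) := fun i => by
    rcases hσ with rfl | rfl <;> split_ifs <;> simp [abs_of_pos hd]
  have hL : ∀ S : Finset ℕ,
      ∑ i ∈ S, |σ * d * (if n ≤ i ∧ i ≤ 2 * n - 1 then 1 else 0)| ≤ d * n := by
    intro S
    simp_rw [hz_abs, ← mul_sum, sum_boole]
    gcongr
    calc #{i ∈ S | n ≤ i ∧ i ≤ 2 * n - 1} ≤ #(Icc n (2 * n - 1)) :=
          card_le_card fun i hi => by simp only [mem_filter, mem_Icc] at hi ⊢; omega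
      _ = n := by rw [Nat.card_Icc]; omega
  have hmain := baernsteinNorm_add_sq_le (x := x₀) (N := N) (M := d)
    (fun i hNi => by_contra fun h => absurd (hsupp i h).2 (by omega))
    (fun i hiN => by simp only [show ¬(n ≤ i ∧ i ≤ 2 * n - 1) by omega, if_false, mul_zero])
    (fun i => (hz_abs i).trans_le (by split_ifs <;> simp [hd.le])) hL
  have hN : (N : ℝ) ≤ N ^ 2 := by exact_mod_cast Nat.le_self_pow two_ne_zero N
  calc _ ≤ _ := hmain
    _ ≤ baernsteinNorm x₀ ^ 2 + 2 * (N * d * 1) + (d * n) ^ 2 := by gcongr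
    _ ≤ baernsteinNorm x₀ ^ 2 + 2 * d * N ^ 2 + (d * n) ^ 2 := by nlinarith
    _ = baernsteinNorm x₀ ^ 2 + δ * N ^ 2 / n + δ ^ 2 / 4 := by rw [hd_def]; field_simp; ring
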